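/- (Corollary 1.) Let γ : ℝ^{Nd}_+ → ℝ_+ be monotone and DR-submodular with γ(0) = 0, let X = ∏_{i=1}^N X_i with each X_i ⊆ ℝ^d_+, and define the game with strategy sets X_i and payoffs π̂_i(x) = γ(x) − γ(0, x_{-i}). Suppose for some α ∈ [0,1] the curvature bound γ(x + x') − γ(x') ≥ (1 − α) γ(x) holds for all x, x' ∈ X. Then for any coarse correlated equilibrium σ of this game (with the relevant integrands integrable) and any x⋆ ∈ X, ∫ γ(x) dσ(x) ≥ γ(x⋆) / (1 + α). -/

import Mathlib

/-!
Order the players. By DR-submodularity, each payoff `γ x - γ (0, x₋ᵢ)` is at most the marginal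
value of block `i` of `x` over the earlier blocks, so the payoffs telescope to at most `γ x`;
likewise each deviation gain towards `x⋆` is at least the marginal value of block `i` of `x⋆`
over `x` plus the earlier blocks of `x⋆`, so the gains add up to at least
`γ (x + x⋆) - γ x ≥ γ x⋆ - α γ x` by the curvature bound. Integrating both bounds against a
coarse correlated equilibrium gives `γ x⋆ - α 𝔼γ ≤ 𝔼γ`.
-/

open MeasureTheory

/-- `f` is monotone on `X`: `f x ≤ f y` whenever `x ≤ y` in `X`. -/
def MonotoneOnSet {ι : Type*} (X : Set (ι → ℝ)) (f : (ι → ℝ) → ℝ) : Prop :=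
  ∀ ⦃x⦄, x ∈ X → ∀ ⦃y⦄, y ∈ X → x ≤ y → f x ≤ f y

/-- `f` is DR-submodular on `X`. -/
def DRSubmodularOn {ι : Type*} [DecidableEq ι] (X : Set (ι → ℝ)) (f : (ι → ℝ) → ℝ) : Prop :=
  ∀ ⦃x y : ι → ℝ⦄, x ∈ X → y ∈ X → x ≤ y →
    ∀ i : ι, ∀ k : ℝ, 0 ≤ k →
      x + Pi.single i k ∈ X → y + Pi.single i k ∈ X →
        f (x + Pi.single i k) - f x ≥ f (y + Pi.single i k) - f y

/-- Replace player `i`'s block of the joint strategy `x` by `v`, i.e. the outcome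
`(v, x₋ᵢ)`. -/
def upd {N d : ℕ} (x : Fin N × Fin d → ℝ) (i : Fin N) (v : Fin d → ℝ) :
    Fin N × Fin d → ℝ :=
  fun q => if q.1 = i then v q.2 else x q

/-- The joint strategy space `X = ∏ᵢ Xᵢ`, viewed inside `ℝ^{Nd}`. -/
def joint {N d : ℕ} (X : Fin N → Set (Fin d → ℝ)) : Set (Fin N × Fin d → ℝ) :=
  {x | ∀ i : Fin N, (fun r => x (i, r)) ∈ X i}

theorem DRSubmodularOn.sub_le_sub_of_le {ι : Type*} [Fintype ι] [DecidableEq ι]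
    {f : (ι → ℝ) → ℝ} (hf : DRSubmodularOn {x : ι → ℝ | 0 ≤ x} f)
    {x y v : ι → ℝ} (hx : 0 ≤ x) (hxy : x ≤ y) (hv : 0 ≤ v) :
    f (y + v) - f y ≤ f (x + v) - f x := by
  have hy : 0 ≤ y := hx.trans hxy
  suffices h : ∀ s : Finset ι, f (y + ∑ i ∈ s, Pi.single i (v i)) - f y ≤
      f (x + ∑ i ∈ s, Pi.single i (v i)) - f x by
    simpa only [Finset.univ_sum_single] using h Finset.univ
  intro s
  induction s using Finset.induction_on with
  | empty => simp
  | @insert r s hr ih =>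
    have hB : 0 ≤ ∑ i ∈ s, Pi.single i (v i) :=
      Finset.sum_nonneg fun i _ => Pi.single_nonneg.2 (hv i)
    have hr' : (0 : ι → ℝ) ≤ Pi.single r (v r) := Pi.single_nonneg.2 (hv r)
    have step := hf (add_nonneg hx hB) (add_nonneg hy hB) (add_le_add_left hxy _) r (v r)
      (hv r) (add_nonneg (add_nonneg hx hB) hr') (add_nonneg (add_nonneg hy hB) hr')
    rw [Finset.sum_insert hr, add_comm (Pi.single r (v r) : ι → ℝ), ← add_assoc, ← add_assoc]
    linarith

section Blocks

variable {N d : ℕ}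

theorem nonneg_of_mem_joint {X : Fin N → Set (Fin d → ℝ)} (hX : ∀ i, ∀ v ∈ X i, 0 ≤ v)
    {x : Fin N × Fin d → ℝ} (hx : x ∈ joint X) : 0 ≤ x :=
  fun q => hX q.1 _ (hx q.1) q.2

theorem upd_nonneg {x : Fin N × Fin d → ℝ} (hx : 0 ≤ x) (i : Fin N)
    {v : Fin d → ℝ} (hv : 0 ≤ v) : 0 ≤ upd x i v := by
  intro q
  unfold upd
  split
  · exact hv q.2
  · exact hx q

theorem upd_zero_add_upd (x : Fin N × Fin d → ℝ) (i : Fin N) (v : Fin d → ℝ) :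
    upd x i 0 + upd 0 i v = upd x i v := by
  funext q
  by_cases h : q.1 = i <;> simp [upd, h]

theorem upd_self (x : Fin N × Fin d → ℝ) (i : Fin N) :
    upd x i (fun r => x (i, r)) = x := by
  funext q
  by_cases h : q.1 = i
  · simp [upd, ← h]
  · simp [upd, h]

def blockPrefix (y : Fin N × Fin d → ℝ) (k : ℕ) : Fin N × Fin d → ℝ :=
  fun q => if (q.1 : ℕ) < k then y q else 0

theorem blockPrefix_zero (y : Fin N × Fin d → ℝ) : blockPrefix y 0 = 0 := by
  funext q; simp [blockPrefix]

theorem blockPrefix_self (y : Fin N × Fin d → ℝ) : blockPrefix y N = y := by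
  funext q; simp [blockPrefix, q.1.isLt]

theorem blockPrefix_nonneg {y : Fin N × Fin d → ℝ} (hy : 0 ≤ y) (k : ℕ) :
    0 ≤ blockPrefix y k := by
  intro q
  unfold blockPrefix
  split
  · exact hy q
  · exact le_rfl

theorem blockPrefix_le_upd {x : Fin N × Fin d → ℝ} (hx : 0 ≤ x) (i : Fin N) :
    blockPrefix x i ≤ upd x i 0 := by
  intro q
  rcases eq_or_ne q.1 i with h | h
  · simp [blockPrefix, upd, h]
  · simp only [blockPrefix, upd, if_neg h]
    split
    · exact le_rfl
    · exact hx q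

theorem upd_le_add_blockPrefix {x y : Fin N × Fin d → ℝ} (hx : 0 ≤ x) (hy : 0 ≤ y)
    (i : Fin N) (k : ℕ) : upd x i 0 ≤ x + blockPrefix y k := by
  intro q
  have hq := blockPrefix_nonneg hy k q
  simp only [upd, Pi.add_apply]
  split
  · exact add_nonneg (hx q) hq
  · exact le_add_of_nonneg_right hq

theorem blockPrefix_succ (y : Fin N × Fin d → ℝ) (i : Fin N) :
    blockPrefix y (i + 1) = blockPrefix y i + upd 0 i (fun r => y (i, r)) := by
  funext ⟨j, t⟩
  simp only [blockPrefix, upd, Pi.add_apply, Pi.zero_apply]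
  rcases lt_trichotomy (j : ℕ) i with h | h | h
  · rw [if_pos (by omega), if_pos h, if_neg (by rintro rfl; omega), add_zero]
  · obtain rfl : j = i := Fin.ext h
    rw [if_pos (by omega), if_neg (by omega), if_pos rfl, zero_add]
  · rw [if_neg (by omega), if_neg (by omega), if_neg (by rintro rfl; omega), add_zero]

theorem sub_eq_sum_blockPrefix (f : (Fin N × Fin d → ℝ) → ℝ) (w z : Fin N × Fin d → ℝ) :
    f (w + z) - f w =
      ∑ i : Fin N, (f (w + blockPrefix z (i + 1)) - f (w + blockPrefix z i)) := by
  rw [Fin.sum_univ_eq_sum_range (fun k => f (w + blockPrefix z (k + 1)) - f (w + blockPrefix z k)),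
    Finset.sum_range_sub (fun k => f (w + blockPrefix z k)), blockPrefix_self, blockPrefix_zero,
    add_zero]

variable {γ : (Fin N × Fin d → ℝ) → ℝ} (hDR : DRSubmodularOn {x : Fin N × Fin d → ℝ | 0 ≤ x} γ)
include hDR

theorem sum_sub_upd_zero_le {x : Fin N × Fin d → ℝ} (hx : 0 ≤ x) :
    ∑ i : Fin N, (γ x - γ (upd x i 0)) ≤ γ x - γ 0 := by
  rw [← zero_add x, sub_eq_sum_blockPrefix γ 0 x, zero_add]
  refine Finset.sum_le_sum fun i _ => ?_
  have h := hDR.sub_le_sub_of_le (blockPrefix_nonneg hx i) (blockPrefix_le_upd hx i)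
    (upd_nonneg le_rfl i fun r => hx (i, r))
  rwa [upd_zero_add_upd, upd_self, ← blockPrefix_succ, ← zero_add (blockPrefix x i),
    ← zero_add (blockPrefix x (i + 1))] at h

theorem sub_le_sum_upd_sub_upd_zero {x xs : Fin N × Fin d → ℝ} (hx : 0 ≤ x) (hxs : 0 ≤ xs) :
    γ (x + xs) - γ x ≤ ∑ i : Fin N, (γ (upd x i (fun r => xs (i, r))) - γ (upd x i 0)) := by
  rw [sub_eq_sum_blockPrefix γ x xs]
  refine Finset.sum_le_sum fun i _ => ?_
  have h := hDR.sub_le_sub_of_le (upd_nonneg hx i le_rfl) (upd_le_add_blockPrefix hx hxs i i)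
    (upd_nonneg le_rfl i fun r => hxs (i, r))
  rwa [upd_zero_add_upd, add_assoc, ← blockPrefix_succ] at h

end Blocks

/-- Roughgarden's smoothness argument, for coarse correlated equilibria. -/
theorem le_integral_of_smooth {Ω ι : Type*} [MeasurableSpace Ω] (σ : Measure Ω)
    [IsProbabilityMeasure σ] (s : Finset ι) (W : Ω → ℝ) (π dev : ι → Ω → ℝ) {c α : ℝ}
    (hα : 0 < 1 + α) (hW : Integrable W σ) (hπ : ∀ i, Integrable (π i) σ)
    (hdev : ∀ i, Integrable (dev i) σ) (hCCE : ∀ i ∈ s, ∫ x, dev i x ∂σ ≤ ∫ x, π i x ∂σ)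
    (hsum : ∀ᵐ x ∂σ, ∑ i ∈ s, π i x ≤ W x)
    (hsmooth : ∀ᵐ x ∂σ, c - α * W x ≤ ∑ i ∈ s, dev i x) :
    c / (1 + α) ≤ ∫ x, W x ∂σ := by
  rw [div_le_iff₀ hα]
  have : c - α * ∫ x, W x ∂σ ≤ ∫ x, W x ∂σ :=
    calc c - α * ∫ x, W x ∂σ = ∫ x, (c - α * W x) ∂σ := by
          rw [integral_sub (integrable_const c) (hW.const_mul α), integral_const,
            integral_const_mul, probReal_univ, one_smul]
      _ ≤ ∫ x, ∑ i ∈ s, dev i x ∂σ :=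
          integral_mono_ae ((integrable_const c).sub (hW.const_mul α))
            (integrable_finsetSum s fun i _ => hdev i) hsmooth
      _ = ∑ i ∈ s, ∫ x, dev i x ∂σ := integral_finsetSum s fun i _ => hdev i
      _ ≤ ∑ i ∈ s, ∫ x, π i x ∂σ := Finset.sum_le_sum hCCE
      _ = ∫ x, ∑ i ∈ s, π i x ∂σ := (integral_finsetSum s fun i _ => hπ i).symm
      _ ≤ ∫ x, W x ∂σ := integral_mono_ae (integrable_finsetSum s fun i _ => hπ i) hW hsum
  linarith

theorem designed_game_cce_guarantee_general {N d : ℕ}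
    (X : Fin N → Set (Fin d → ℝ)) (hX : ∀ i, ∀ v ∈ X i, 0 ≤ v)
    (γ : (Fin N × Fin d → ℝ) → ℝ) (hγ0 : γ 0 = 0)
    (hDR : DRSubmodularOn {x : Fin N × Fin d → ℝ | 0 ≤ x} γ)
    (α : ℝ) (hα0 : 0 ≤ α)
    (hcurv : ∀ x ∈ joint X, ∀ x' ∈ joint X, γ (x + x') - γ x' ≥ (1 - α) * γ x)
    (σ : Measure (Fin N × Fin d → ℝ)) [IsProbabilityMeasure σ]
    (hsupp : ∀ᵐ x ∂σ, x ∈ joint X)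
    (hCCE : ∀ i : Fin N, ∀ v ∈ X i,
      (∫ x, (γ x - γ (upd x i 0)) ∂σ) ≥ ∫ x, (γ (upd x i v) - γ (upd x i 0)) ∂σ)
    (hint_γ : Integrable γ σ)
    (hint_0 : ∀ i : Fin N, Integrable (fun x => γ (upd x i 0)) σ)
    (hint_dev : ∀ i : Fin N, ∀ v ∈ X i, Integrable (fun x => γ (upd x i v)) σ) :
    ∀ xstar ∈ joint X, (∫ x, γ x ∂σ) ≥ γ xstar / (1 + α) := by
  intro xstar hxstar
  have hxs := nonneg_of_mem_joint hX hxstar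
  refine le_integral_of_smooth σ Finset.univ γ (fun i x => γ x - γ (upd x i 0))
    (fun i x => γ (upd x i (fun r => xstar (i, r))) - γ (upd x i 0)) (by linarith) hint_γ
    (fun i => hint_γ.sub (hint_0 i)) (fun i => (hint_dev i _ (hxstar i)).sub (hint_0 i))
    (fun i _ => hCCE i _ (hxstar i)) ?_ ?_
  · filter_upwards [hsupp] with x hx
    simpa [hγ0] using sum_sub_upd_zero_le hDR (nonneg_of_mem_joint hX hx)
  · filter_upwards [hsupp] with x hx
    have hdev := sub_le_sum_upd_sub_upd_zero hDR (nonneg_of_mem_joint hX hx) hxs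
    have hc := hcurv x hx xstar hxstar
    linarith [add_comm x xstar]

/-- Corollary 1: for the designed game with payoffs `π̂ᵢ(x) = γ(x) − γ(0, x₋ᵢ)`, where `γ` is
monotone DR-submodular with `γ(0) = 0` and curvature bound `α`, every coarse correlated
equilibrium `σ` satisfies `𝔼_{x∼σ}[γ(x)] ≥ γ(x⋆)/(1 + α)` for every `x⋆ ∈ X`. -/
theorem designed_game_cce_guarantee {N d : ℕ}
    (X : Fin N → Set (Fin d → ℝ)) (hX : ∀ i, ∀ v ∈ X i, 0 ≤ v)
    (γ : (Fin N × Fin d → ℝ) → ℝ) (hγ0 : γ 0 = 0)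
    (hγnn : ∀ x : Fin N × Fin d → ℝ, 0 ≤ x → 0 ≤ γ x)
    (hmono : MonotoneOnSet {x : Fin N × Fin d → ℝ | 0 ≤ x} γ)
    (hDR : DRSubmodularOn {x : Fin N × Fin d → ℝ | 0 ≤ x} γ)
    (α : ℝ) (hα0 : 0 ≤ α) (hα1 : α ≤ 1)
    (hcurv : ∀ x ∈ joint X, ∀ x' ∈ joint X, γ (x + x') - γ x' ≥ (1 - α) * γ x)
    (σ : Measure (Fin N × Fin d → ℝ)) [IsProbabilityMeasure σ]
    (hsupp : ∀ᵐ x ∂σ, x ∈ joint X)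
    (hCCE : ∀ i : Fin N, ∀ v ∈ X i,
      (∫ x, (γ x - γ (upd x i 0)) ∂σ) ≥ ∫ x, (γ (upd x i v) - γ (upd x i 0)) ∂σ)
    (hint_γ : Integrable γ σ)
    (hint_0 : ∀ i : Fin N, Integrable (fun x => γ (upd x i 0)) σ)
    (hint_dev : ∀ i : Fin N, ∀ v ∈ X i, Integrable (fun x => γ (upd x i v)) σ) :
    ∀ xstar ∈ joint X, (∫ x, γ x ∂σ) ≥ γ xstar / (1 + α) :=
  designed_game_cce_guarantee_general X hX γ hγ0 hDR α hα0 hcurv σ hsupp hCCE hint_γ hint_0 hint_dev
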